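/- Let π* and π be joint policies in a finite Markov game with bounded rewards and γ ∈ [0,1). Let λ*_π(τ_i) be the probability of generating the length-t agent-i trajectory τ_i = {s^{(j)}, a_i^{(j)}}_{j=0}^t when agent i uses π_i and the other agents use π*_{-i}, starting from s^{(0)} ∼ η. Then lim_{t→∞} Σ_{i=1}^N Σ_{τ_i} λ*_π(τ_i) (Q_i^{(t)}(τ_i; π*, r) − v̂_i(s^{(0)}; π*, r)) = Σ_{i=1}^N E_{π_i, π*_{-i}}[Σ_t γ^t r_i] − Σ_{i=1}^N E_{π*}[Σ_t γ^t r_i]. -/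

import Mathlib

open scoped BigOperators

/-- A finite Markov game with `N` agents: finite state space `S`, finite action
spaces `A i`, transition kernel `P`, bounded rewards `r i`, discount `γ ∈ [0,1)`. -/
structure MarkovGame (N : ℕ) (S : Type) (A : Fin N → Type) [Fintype S]
    [∀ i, Fintype (A i)] where
  P : S → ((i : Fin N) → A i) → S → ℝ
  P_nonneg : ∀ s a s', 0 ≤ P s a s'
  P_sum : ∀ s a, ∑ s', P s a s' = 1
  r : Fin N → S → ((i : Fin N) → A i) → ℝ
  γ : ℝ
  γ_nonneg : 0 ≤ γ
  γ_lt_one : γ < 1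

variable {N : ℕ} {S : Type} {A : Fin N → Type} [Fintype S] [DecidableEq S]
  [∀ i, Fintype (A i)] [∀ i, DecidableEq (A i)]

/-- A (stationary, Markovian) joint policy: for each agent, a map from states to
(scores of) distributions over that agent's actions. -/
abbrev JPol (N : ℕ) (S : Type) (A : Fin N → Type) := (i : Fin N) → S → A i → ℝ

/-- `p` is a probability distribution on a finite type. -/
def IsDist {α : Type} [Fintype α] (p : α → ℝ) : Prop :=
  (∀ x, 0 ≤ p x) ∧ ∑ x, p x = 1

/-- Each agent's policy gives a probability distribution over actions in every state. -/
def IsJPol (π : JPol N S A) : Prop := ∀ i s, IsDist (π i s)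

/-- Probability of the joint action `a` in state `s` (agents act independently). -/
def jp (π : JPol N S A) (s : S) (a : (i : Fin N) → A i) : ℝ := ∏ i, π i s (a i)

/-- Extend an assignment of actions to all agents except `i` into a joint action
where agent `i` plays `ai`. -/
def extendA (i : Fin N) (ai : A i) (b : (j : {j : Fin N // j ≠ i}) → A j.1) :
    (j : Fin N) → A j :=
  fun j => if h : j = i then (by subst h; exact ai) else b ⟨j, h⟩

/-- Expectation over the actions of all agents other than `i` (drawn from `π_{-i}(·|s)`),
with agent `i` playing the fixed action `ai`. -/
def Eminus (π : JPol N S A) (i : Fin N) (s : S) (ai : A i)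
    (f : ((j : Fin N) → A j) → ℝ) : ℝ :=
  ∑ b : ((j : {j : Fin N // j ≠ i}) → A j.1),
    (∏ j, π j.1 s (b j)) * f (extendA i ai b)

/-- The Bellman operator for agent `i` under joint policy `π`:
`(T_i v)(s) = E_{a∼π(·|s)}[r_i(s,a) + γ Σ_{s'} P(s'|s,a) v(s')]`. -/
def bell (G : MarkovGame N S A) (π : JPol N S A) (i : Fin N) (v : S → ℝ) : S → ℝ :=
  fun s => ∑ a, jp π s a * (G.r i s a + G.γ * ∑ s', G.P s a s' * v s')

/-- `q̂_i(s, a_i) = E_{π_{-i}}[r_i(s,a) + γ Σ_{s'} P(s'|s,a) v(s')]`. -/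
def qhat (G : MarkovGame N S A) (π : JPol N S A) (i : Fin N) (v : S → ℝ)
    (s : S) (ai : A i) : ℝ :=
  Eminus π i s ai (fun a => G.r i s a + G.γ * ∑ s', G.P s a s' * v s')

/-- One-step evolution of a state distribution under joint policy `π`. -/
def stepDist (G : MarkovGame N S A) (π : JPol N S A) (d : S → ℝ) : S → ℝ :=
  fun s' => ∑ s, d s * ∑ a, jp π s a * G.P s a s'

/-- Expected total discounted reward `E_π[Σ_t γ^t ρ(s_t, a_t)]` with initial
state distribution `η` and reward function `ρ`. -/
noncomputable def expRet (G : MarkovGame N S A) (π : JPol N S A)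
    (ρ : S → ((i : Fin N) → A i) → ℝ) (η : S → ℝ) : ℝ :=
  ∑' t : ℕ, G.γ ^ t * ∑ s, ((stepDist G π)^[t] η) s * ∑ a, jp π s a * ρ s a

/-- Value of joint policy `π` for agent `i` started from state `s0`. -/
noncomputable def val (G : MarkovGame N S A) (π : JPol N S A) (i : Fin N) (s0 : S) : ℝ :=
  expRet G π (G.r i) (fun s => if s = s0 then 1 else 0)

/-- `π` is a Nash equilibrium: no agent can increase its value (from any state) by
unilaterally switching to another stationary policy. -/
noncomputable def IsNash (G : MarkovGame N S A) (π : JPol N S A) : Prop :=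
  IsJPol π ∧ ∀ (i : Fin N) (p : S → A i → ℝ), (∀ s, IsDist (p s)) →
    ∀ s, val G (Function.update π i p) i s ≤ val G π i s

/-- Marginal transition probability for agent `i`: probability of moving to `s'`
when agent `i` plays `ai` in `s` and the others play `π_{-i}(·|s)`. -/
def stepProb (G : MarkovGame N S A) (π : JPol N S A) (i : Fin N)
    (s : S) (ai : A i) (s' : S) : ℝ :=
  Eminus π i s ai (fun a => G.P s a s')

/-- The `t`-step unrolled Q-value `Q_i^{(t)}({s^{(j)}, a_i^{(j)}}_{j=0}^t; π, r)`:
expected discounted return for agent `i` when the states are conditioned to be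
`s^{(j)}` and agent `i` plays the prescribed actions for the first `t` steps
(following `π_i` thereafter), while other agents follow `π_{-i}`. -/
def Qt (G : MarkovGame N S A) (π : JPol N S A) (i : Fin N) (v : S → ℝ) {t : ℕ}
    (τ : Fin (t + 1) → S × A i) : ℝ :=
  (∑ j : Fin t, G.γ ^ (j : ℕ) *
      Eminus π i (τ j.castSucc).1 (τ j.castSucc).2 (fun a => G.r i (τ j.castSucc).1 a))
    + G.γ ^ t * qhat G π i v (τ (Fin.last t)).1 (τ (Fin.last t)).2

/-- `λ*_π(τ_i)`: probability of generating the agent-`i` trajectory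
`τ = {s^{(j)}, a_i^{(j)}}_{j=0}^t` with `s^{(0)} ∼ η`, agent `i` using `π_i`, and
the other agents using `π*_{-i}` (transitions marginalized over the others' actions). -/
def lam (G : MarkovGame N S A) (π πstar : JPol N S A) (i : Fin N) (η : S → ℝ)
    {t : ℕ} (τ : Fin (t + 1) → S × A i) : ℝ :=
  η (τ 0).1 * π i (τ 0).1 (τ 0).2 *
    ∏ j : Fin t, (π i (τ j.succ).1 (τ j.succ).2 *
      stepProb G πstar i (τ j.castSucc).1 (τ j.castSucc).2 (τ j.succ).1)

/-!
Summing `λ*_π` over every coordinate of a trajectory except the `j`-th shows that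
`(s^{(j)}, a_i^{(j)})` is distributed as under the joint policy `(π_i, π*_{-i})`: the state
marginal is the `j`-fold push-forward of `η` by that policy, and the action is drawn from `π_i`.
Hence the `λ*_π`-average of `Q_i^{(t)}` is the `t`-step partial sum of the discounted return of
`(π_i, π*_{-i})` plus `γ^t` times a bounded term, which tends to that return. On the other side,
the average of `v̂_i(s^{(0)})` is `E_η v̂_i`, and iterating the Bellman equation
`v̂_i = T_i v̂_i` telescopes it into the discounted return of `π*`.
-/

open Finset

theorem tendsto_pow_mul_of_abs_le {r : ℝ} (hr0 : 0 ≤ r) (hr1 : r < 1) {b : ℕ → ℝ} {K : ℝ}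
    (hb : ∀ t, |b t| ≤ K) :
    Filter.Tendsto (fun t => r ^ t * b t) Filter.atTop (nhds 0) :=
  (tendsto_pow_atTop_nhds_zero_of_lt_one hr0 hr1).zero_mul_isBoundedUnder_le
    (Filter.isBoundedUnder_of ⟨K, hb⟩)

theorem IsDist.abs_sum_mul_le {α : Type} [Fintype α] {d : α → ℝ} (hd : IsDist d)
    (f : α → ℝ) : |∑ x, d x * f x| ≤ ∑ x, |f x| := by
  refine (abs_sum_le_sum_abs _ _).trans (sum_le_sum fun x _ => ?_)
  have hdx : d x ≤ 1 := hd.2 ▸ single_le_sum (fun y _ => hd.1 y) (mem_univ x)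
  rw [abs_mul, abs_of_nonneg (hd.1 x)]
  exact mul_le_of_le_one_left (abs_nonneg _) hdx

section
omit [DecidableEq S] [∀ i, DecidableEq (A i)]

section
omit [Fintype S]

theorem IsJPol.update {q : JPol N S A} (hq : IsJPol q) {i : Fin N} {p : S → A i → ℝ}
    (hp : ∀ s, IsDist (p s)) : IsJPol (Function.update q i p) := by
  intro j s
  rcases eq_or_ne j i with rfl | h
  · simpa using hp s
  · simpa [Function.update_of_ne h] using hq j s

theorem jp_nonneg {q : JPol N S A} (hq : IsJPol q) (s : S) (a : (j : Fin N) → A j) :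
    0 ≤ jp q s a :=
  prod_nonneg fun j _ => (hq j s).1 _

theorem sum_jp_eq_one {q : JPol N S A} (hq : IsJPol q) (s : S) : ∑ a, jp q s a = 1 := by
  unfold jp
  rw [← Fintype.prod_sum]
  exact prod_eq_one fun j _ => (hq j s).2

theorem Eminus_const_one {q : JPol N S A} (hq : IsJPol q) (i : Fin N) (s : S) (ai : A i) :
    Eminus q i s ai (fun _ => 1) = 1 := by
  simp only [Eminus, mul_one]
  rw [← Fintype.prod_sum]
  exact prod_eq_one fun j _ => (hq j.1 s).2

theorem sum_jp_update_mul (q : JPol N S A) (i : Fin N) (p : S → A i → ℝ) (s : S)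
    (f : ((j : Fin N) → A j) → ℝ) :
    ∑ a, jp (Function.update q i p) s a * f a = ∑ ai, p s ai * Eminus q i s ai f := by
  rw [← (Equiv.piSplitAt i A).symm.sum_comp, Fintype.sum_prod_type]
  refine sum_congr rfl fun ai _ => ?_
  rw [Eminus, mul_sum]
  refine sum_congr rfl fun b _ => ?_
  have hext : (Equiv.piSplitAt i A).symm (ai, b) = extendA i ai b := by
    funext j
    rcases eq_or_ne j i with rfl | h <;> simp [extendA, *]
  have hothers : ∀ j : {j // j ≠ i},
      Function.update q i p j s (extendA i ai b j) = q j s (b j) := fun j => by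
    simp [extendA, j.2]
  rw [hext, jp, Fintype.prod_eq_mul_prod_subtype_ne _ i, prod_congr rfl fun j _ => hothers j]
  simp [extendA, mul_assoc]

end

section

variable (G : MarkovGame N S A)

theorem sum_stepProb_eq_one {q : JPol N S A} (hq : IsJPol q) (i : Fin N) (s : S) (ai : A i) :
    ∑ s', stepProb G q i s ai s' = 1 := by
  calc ∑ s', stepProb G q i s ai s' = Eminus q i s ai (fun a => ∑ s', G.P s a s') := by
        simp only [stepProb, Eminus, mul_sum]
        exact sum_comm
    _ = 1 := by simpa only [G.P_sum] using Eminus_const_one hq i s ai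

theorem isDist_stepDist {q : JPol N S A} (hq : IsJPol q) {d : S → ℝ} (hd : IsDist d) :
    IsDist (stepDist G q d) := by
  refine ⟨fun s' => sum_nonneg fun s _ => mul_nonneg (hd.1 s) <|
    sum_nonneg fun a _ => mul_nonneg (jp_nonneg hq s a) (G.P_nonneg s a s'), ?_⟩
  calc ∑ s', stepDist G q d s' = ∑ s, d s * ∑ a, jp q s a * ∑ s', G.P s a s' := by
        simp only [stepDist, mul_sum]
        rw [sum_comm]
        exact sum_congr rfl fun s _ => sum_comm
    _ = 1 := by simp [G.P_sum, sum_jp_eq_one hq, hd.2]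

theorem isDist_iterate_stepDist {q : JPol N S A} (hq : IsJPol q) {η : S → ℝ} (hη : IsDist η)
    (t : ℕ) : IsDist ((stepDist G q)^[t] η) := by
  induction t with
  | zero => exact hη
  | succ t ih => exact Function.iterate_succ_apply' (stepDist G q) t η ▸ isDist_stepDist G hq ih

theorem sum_mul_eq_of_bell_eq (q : JPol N S A) (i : Fin N) {v : S → ℝ}
    (hv : bell G q i v = v) (d : S → ℝ) :
    ∑ s, d s * v s
      = ∑ s, d s * ∑ a, jp q s a * G.r i s a + G.γ * ∑ s', stepDist G q d s' * v s' := by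
  conv_lhs => rw [← hv]
  simp only [bell, stepDist, mul_add, mul_sum, sum_mul, sum_add_distrib]
  congr 1
  refine (sum_comm.trans (sum_congr rfl fun s _ => sum_comm.trans ?_)).symm
  exact sum_congr rfl fun a _ => sum_congr rfl fun s' _ => by ring

def expRewardAt (q : JPol N S A) (ρ : S → ((i : Fin N) → A i) → ℝ) (η : S → ℝ) (t : ℕ) : ℝ :=
  ∑ s, ((stepDist G q)^[t] η) s * ∑ a, jp q s a * ρ s a

theorem hasSum_expRet {q : JPol N S A} (hq : IsJPol q) {η : S → ℝ} (hη : IsDist η)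
    (ρ : S → ((i : Fin N) → A i) → ℝ) :
    HasSum (fun t => G.γ ^ t * expRewardAt G q ρ η t) (expRet G q ρ η) := by
  refine Summable.hasSum (Summable.of_norm_bounded
    ((summable_geometric_of_lt_one G.γ_nonneg G.γ_lt_one).mul_right
      (∑ s, |∑ a, jp q s a * ρ s a|)) fun t => ?_)
  rw [Real.norm_eq_abs, abs_mul, abs_pow, abs_of_nonneg G.γ_nonneg]
  exact mul_le_mul_of_nonneg_left ((isDist_iterate_stepDist G hq hη t).abs_sum_mul_le _)
    (pow_nonneg G.γ_nonneg t)

theorem sum_range_expRewardAt_of_bell_eq (q : JPol N S A) (i : Fin N) {v : S → ℝ}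
    (hv : bell G q i v = v) (η : S → ℝ) (t : ℕ) :
    ∑ j ∈ range t, G.γ ^ j * expRewardAt G q (G.r i) η j
      = ∑ s, η s * v s - G.γ ^ t * ∑ s, ((stepDist G q)^[t] η) s * v s := by
  induction t with
  | zero => simp
  | succ t ih =>
    rw [sum_range_succ, ih, sum_mul_eq_of_bell_eq G q i hv ((stepDist G q)^[t] η),
      Function.iterate_succ_apply', expRewardAt]
    ring

theorem expRet_eq_sum_mul_of_bell_eq {q : JPol N S A} (hq : IsJPol q) {η : S → ℝ}
    (hη : IsDist η) {i : Fin N} {v : S → ℝ} (hv : bell G q i v = v) :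
    expRet G q (G.r i) η = ∑ s, η s * v s := by
  have hlim := (tendsto_const_nhds (x := ∑ s, η s * v s)).sub
    (tendsto_pow_mul_of_abs_le G.γ_nonneg G.γ_lt_one
      fun t => (isDist_iterate_stepDist G hq hη t).abs_sum_mul_le v)
  rw [sub_zero] at hlim
  exact tendsto_nhds_unique (hasSum_expRet G hq hη (G.r i)).tendsto_sum_nat
    (hlim.congr fun t => (sum_range_expRewardAt_of_bell_eq G q i hv η t).symm)

end

section

variable (G : MarkovGame N S A) (π πstar : JPol N S A) (i : Fin N) (η : S → ℝ)

/-- The law of `(s^{(t)}, a_i^{(t)})` under `λ*_π`: the state follows the joint policy in which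
only agent `i` deviates to `π i`. -/
def lamMarginal (t : ℕ) (x : S × A i) : ℝ :=
  ((stepDist G (Function.update πstar i (π i)))^[t] η) x.1 * π i x.1 x.2

theorem sum_lamMarginal_mul_stepProb (t : ℕ) (s' : S) :
    ∑ y, lamMarginal G π πstar i η t y * stepProb G πstar i y.1 y.2 s'
      = ((stepDist G (Function.update πstar i (π i)))^[t + 1] η) s' := by
  rw [Function.iterate_succ_apply', stepDist, Fintype.sum_prod_type]
  refine sum_congr rfl fun s _ => ?_
  rw [sum_jp_update_mul πstar i (π i) s, mul_sum]
  exact sum_congr rfl fun ai _ => by rw [lamMarginal, stepProb]; ring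

theorem lam_snoc {t : ℕ} (τ : Fin (t + 1) → S × A i) (x : S × A i) :
    lam G π πstar i η (Fin.snoc τ x : Fin (t + 2) → S × A i)
      = lam G π πstar i η τ *
        (π i x.1 x.2 * stepProb G πstar i (τ (Fin.last t)).1 (τ (Fin.last t)).2 x.1) := by
  have h0 : (Fin.snoc τ x : Fin (t + 2) → S × A i) 0 = τ 0 := by
    rw [← Fin.castSucc_zero, Fin.snoc_castSucc]
  rw [lam, lam, h0, Fin.prod_univ_castSucc]
  simp only [Fin.succ_castSucc, Fin.snoc_castSucc, Fin.succ_last, Fin.snoc_last]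
  ring

theorem sum_lam_mul_snoc {t : ℕ} (F : (Fin (t + 2) → S × A i) → ℝ) :
    ∑ τ, lam G π πstar i η τ * F τ
      = ∑ τ : Fin (t + 1) → S × A i, lam G π πstar i η τ * ∑ x,
          π i x.1 x.2 * stepProb G πstar i (τ (Fin.last t)).1 (τ (Fin.last t)).2 x.1 *
            F (Fin.snoc τ x) := by
  rw [← (Fin.snocEquiv _).sum_comp, Fintype.sum_prod_type, sum_comm]
  refine sum_congr rfl fun τ _ => ?_
  rw [mul_sum]
  refine sum_congr rfl fun x _ => ?_
  rw [show (Fin.snocEquiv fun _ => S × A i) (x, τ) = Fin.snoc τ x from rfl, lam_snoc]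
  ring

variable {π πstar}

theorem sum_mul_stepProb_eq_one (hπ : IsJPol π) (hstar : IsJPol πstar) (s : S) (ai : A i) :
    ∑ x : S × A i, π i x.1 x.2 * stepProb G πstar i s ai x.1 = 1 := by
  simp only [Fintype.sum_prod_type, ← sum_mul, (hπ i _).2, one_mul]
  exact sum_stepProb_eq_one G hstar i s ai

theorem sum_lam_mul_apply (hπ : IsJPol π) (hstar : IsJPol πstar) {t : ℕ}
    (j : Fin (t + 1)) (g : S × A i → ℝ) :
    ∑ τ, lam G π πstar i η τ * g (τ j) = ∑ x, lamMarginal G π πstar i η j x * g x := by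
  induction t generalizing g with
  | zero =>
    rw [Fin.fin_one_eq_zero j, ← (Equiv.funUnique (Fin 1) (S × A i)).symm.sum_comp]
    simp [lam, lamMarginal]
  | succ t ih =>
    induction j using Fin.lastCases with
    | last =>
      simp only [sum_lam_mul_snoc, Fin.snoc_last, mul_sum]
      rw [sum_comm]
      refine sum_congr rfl fun x _ => ?_
      have := ih (Fin.last t) fun y => π i x.1 x.2 * stepProb G πstar i y.1 y.2 x.1 * g x
      simp only [Fin.val_last] at this ⊢
      rw [this, lamMarginal, ← sum_lamMarginal_mul_stepProb, sum_mul, sum_mul]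
      exact sum_congr rfl fun y _ => by ring
    | cast j =>
      simp only [sum_lam_mul_snoc, Fin.snoc_castSucc, ← sum_mul,
        sum_mul_stepProb_eq_one G i hπ hstar, one_mul, Fin.val_castSucc]
      exact ih j g

end

section

variable (G : MarkovGame N S A) {π πstar : JPol N S A} (i : Fin N) {η : S → ℝ}

theorem isDist_lamMarginal (hπ : IsJPol π) (hstar : IsJPol πstar) (hη : IsDist η) (t : ℕ) :
    IsDist (lamMarginal G π πstar i η t) := by
  have hd := isDist_iterate_stepDist G (hstar.update (hπ i)) hη t
  refine ⟨fun x => mul_nonneg (hd.1 _) ((hπ i _).1 _), ?_⟩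
  simp only [lamMarginal, Fintype.sum_prod_type, ← mul_sum, (hπ i _).2, mul_one, hd.2]

theorem sum_lamMarginal_mul_reward (π πstar : JPol N S A) (η : S → ℝ) (t : ℕ) :
    ∑ x, lamMarginal G π πstar i η t x * Eminus πstar i x.1 x.2 (G.r i x.1)
      = expRewardAt G (Function.update πstar i (π i)) (G.r i) η t := by
  rw [expRewardAt, Fintype.sum_prod_type]
  refine sum_congr rfl fun s _ => ?_
  rw [sum_jp_update_mul, mul_sum]
  exact sum_congr rfl fun ai _ => by rw [lamMarginal]; ring

theorem sum_lam_mul_Qt (hπ : IsJPol π) (hstar : IsJPol πstar) (v : S → ℝ) (t : ℕ) :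
    ∑ τ : Fin (t + 1) → S × A i, lam G π πstar i η τ * Qt G πstar i v τ
      = ∑ j ∈ range t, G.γ ^ j * expRewardAt G (Function.update πstar i (π i)) (G.r i) η j
        + G.γ ^ t * ∑ x, lamMarginal G π πstar i η t x * qhat G πstar i v x.1 x.2 := by
  simp only [Qt, mul_add, mul_sum, sum_add_distrib]
  rw [sum_comm, ← Fin.sum_univ_eq_sum_range]
  congr 1
  · refine sum_congr rfl fun j _ => ?_
    have h := sum_lam_mul_apply G i η hπ hstar j.castSucc
      fun x => Eminus πstar i x.1 x.2 (G.r i x.1)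
    rw [Fin.val_castSucc, sum_lamMarginal_mul_reward] at h
    rw [← h, mul_sum]
    exact sum_congr rfl fun τ _ => by ring
  · have h := sum_lam_mul_apply G i η hπ hstar (Fin.last t) fun x => qhat G πstar i v x.1 x.2
    rw [Fin.val_last] at h
    rw [← mul_sum, ← h, mul_sum]
    exact sum_congr rfl fun τ _ => by ring

theorem sum_lam_mul_initial (hπ : IsJPol π) (hstar : IsJPol πstar) (v : S → ℝ) (t : ℕ) :
    ∑ τ : Fin (t + 1) → S × A i, lam G π πstar i η τ * v (τ 0).1 = ∑ s, η s * v s := by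
  rw [sum_lam_mul_apply G i η hπ hstar 0 fun x => v x.1]
  simp only [lamMarginal, Fin.val_zero, Function.iterate_zero, id, Fintype.sum_prod_type]
  refine sum_congr rfl fun s _ => ?_
  rw [← sum_mul, ← mul_sum, (hπ i s).2, mul_one]

theorem tendsto_sum_lam_mul_Qt_sub (hπ : IsJPol π) (hstar : IsJPol πstar) (hη : IsDist η)
    {v : S → ℝ} (hv : bell G πstar i v = v) :
    Filter.Tendsto
      (fun t : ℕ => ∑ τ : Fin (t + 1) → S × A i,
        lam G π πstar i η τ * (Qt G πstar i v τ - v (τ 0).1))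
      Filter.atTop
      (nhds (expRet G (Function.update πstar i (π i)) (G.r i) η - expRet G πstar (G.r i) η)) := by
  have hdeviate := (hasSum_expRet G (hstar.update (hπ i)) hη (G.r i)).tendsto_sum_nat
  have hremainder := tendsto_pow_mul_of_abs_le G.γ_nonneg G.γ_lt_one fun t =>
    (isDist_lamMarginal G i hπ hstar hη t).abs_sum_mul_le fun x => qhat G πstar i v x.1 x.2
  rw [expRet_eq_sum_mul_of_bell_eq G hstar hη hv]
  refine ((add_zero (expRet G _ (G.r i) η) ▸ hdeviate.add hremainder).sub_const _).congr
    fun t => ?_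
  rw [← sum_lam_mul_Qt G i hπ hstar, ← sum_lam_mul_initial G i hπ hstar v t, ← sum_sub_distrib]
  simp only [mul_sub]

end

end

/-- `lim_{t→∞} Σ_i Σ_{τ_i} λ*_π(τ_i) (Q_i^{(t)}(τ_i; π*, r) − v̂_i(s^{(0)}; π*, r))
= Σ_i E_{π_i, π*_{-i}}[Σ_t γ^t r_i] − Σ_i E_{π*}[Σ_t γ^t r_i]`. -/
theorem stmt7 (G : MarkovGame N S A) (π πstar : JPol N S A)
    (hπ : IsJPol π) (hstar : IsJPol πstar) (η : S → ℝ) (hη : IsDist η)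
    (v : Fin N → S → ℝ) (hv : ∀ i, bell G πstar i (v i) = v i) :
    Filter.Tendsto
      (fun t : ℕ => ∑ i : Fin N, ∑ τ : Fin (t + 1) → S × A i,
        lam G π πstar i η τ * (Qt G πstar i (v i) τ - v i (τ 0).1))
      Filter.atTop
      (nhds ((∑ i : Fin N, expRet G (Function.update πstar i (π i)) (G.r i) η) -
        ∑ i : Fin N, expRet G πstar (G.r i) η)) := by
  rw [← sum_sub_distrib]
  exact tendsto_finsetSum _ fun i _ => tendsto_sum_lam_mul_Qt_sub G i hπ hstar hη (hv i)
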